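/- Fix λ > 0 and h ≥ 0 and a constant c > 0. Then lim_{n→∞} (log n)²/n · ∑_{i : i − c·b_n² ≥ h·b_n²/log n} exp(−(λ/c)·((log n)²/n)·(i − c·b_n²)) = (c/λ)·e^{−λh/c}, where the sum is over integers i with c·b_n² ≤ i ≤ n and b_n² ~ n/log n. -/

import Mathlib

/-!
Put `A_n = (λ/c)(log n)²/n` and `T_n = b_n²(c + h/log n)`. The summation range is
`⌈T_n⌉ ≤ i ≤ n` and the summands form a geometric progression of ratio `e^{-A_n}`, so
`A_n ∑ = A_n/(1 - e^{-A_n}) · e^{-A_n(⌈T_n⌉ - c b_n²)} · (1 - e^{-A_n(n + 1 - ⌈T_n⌉)})`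
(the ceiling costs at most `A_n` in the exponent).
As `A_n → 0⁺`, the first factor tends to `1`; the second tends to `e^{-λh/c}` because
`A_n (T_n - c b_n²) = (λh/c) · b_n² log n / n`; the third tends to `1` because
`A_n (n - T_n) ~ (λ/c)(log n)² → ∞`.
-/

open Filter Real Topology Finset

theorem tendsto_div_one_sub_exp_neg :
    Tendsto (fun x : ℝ => x / (1 - exp (-x))) (𝓝[≠] 0) (𝓝 1) := by
  have hderiv : HasDerivAt (fun x : ℝ => 1 - exp (-x)) 1 0 := by
    simpa using ((hasDerivAt_neg (0 : ℝ)).exp).const_sub 1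
  simpa [slope_def_field] using (hasDerivAt_iff_tendsto_slope.1 hderiv).inv₀ one_ne_zero

theorem one_sub_exp_neg_mul_sum_Icc_exp (a β : ℝ) {m n : ℕ} (hmn : m ≤ n + 1) :
    (1 - exp (-a)) * ∑ i ∈ Icc m n, exp (-a * (i - β)) =
      exp (-a * (m - β)) * (1 - exp (-a * (n + 1 - m))) := by
  have hterm (k : ℕ) : exp (-a * ((m + k : ℕ) - β)) = exp (-a * (m - β)) * exp (-a) ^ k := by
    rw [← exp_nat_mul, ← exp_add]; congr 1; push_cast; ring
  rw [← Ico_add_one_right_eq_Icc, sum_Ico_eq_sum_range]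
  simp_rw [hterm, ← mul_sum]
  rw [mul_left_comm, mul_neg_geom_sum, ← exp_nat_mul, Nat.cast_sub hmn]
  push_cast
  ring_nf

theorem tendsto_mul_sum_Icc_ceil_exp {A T β : ℕ → ℝ} {d : ℝ}
    (hA : Tendsto A atTop (𝓝[>] 0)) (hT : ∀ᶠ n in atTop, 0 ≤ T n)
    (htail : Tendsto (fun n => A n * (n - T n)) atTop atTop)
    (hd : Tendsto (fun n => A n * (T n - β n)) atTop (𝓝 d)) :
    Tendsto (fun n => A n * ∑ i ∈ Icc ⌈T n⌉₊ n, exp (-A n * (i - β n))) atTop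
      (𝓝 (exp (-d))) := by
  have hApos : ∀ᶠ n in atTop, 0 < A n := hA self_mem_nhdsWithin
  have hratio : Tendsto (fun n => A n / (1 - exp (-A n))) atTop (𝓝 1) :=
    tendsto_div_one_sub_exp_neg.comp
      (tendsto_nhdsWithin_mono_right (fun _ hx => ne_of_gt hx) hA)
  have hround : Tendsto (fun n => A n * (⌈T n⌉₊ - T n)) atTop (𝓝 0) := by
    refine squeeze_zero' ?_ ?_ (tendsto_nhds_of_tendsto_nhdsWithin hA)
    · filter_upwards [hApos] with n hn using mul_nonneg hn.le (sub_nonneg.2 (Nat.le_ceil _))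
    · filter_upwards [hApos, hT] with n hn hTn
      exact mul_le_of_le_one_right hn.le (by linarith [Nat.ceil_lt_add_one hTn])
  have hhead : Tendsto (fun n => exp (-A n * (⌈T n⌉₊ - β n))) atTop (𝓝 (exp (-d))) := by
    refine (continuous_exp.tendsto _).comp ?_
    have := (hround.add hd).neg
    rw [zero_add] at this
    exact this.congr fun n => by ring
  have htail' : Tendsto (fun n => A n * (n + 1 - ⌈T n⌉₊)) atTop atTop := by
    refine tendsto_atTop_mono' atTop ?_ htail
    filter_upwards [hApos, hT] with n hn hTn
    exact mul_le_mul_of_nonneg_left (by linarith [Nat.ceil_lt_add_one hTn]) hn.le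
  have hrest : Tendsto (fun n => 1 - exp (-A n * (n + 1 - ⌈T n⌉₊))) atTop (𝓝 1) := by
    simpa using (tendsto_exp_atBot.comp (tendsto_neg_atTop_atBot.comp htail')).const_sub 1
  have hceil : ∀ᶠ n in atTop, ⌈T n⌉₊ ≤ n + 1 := by
    filter_upwards [htail.eventually_gt_atTop 0, hApos] with n hpos hn
    have : T n < n := by nlinarith
    exact (Nat.ceil_le.2 this.le).trans n.le_succ
  simpa using ((hratio.mul hhead).mul hrest).congr' <| by
    filter_upwards [hApos, hceil] with n hn hle
    have hr : 1 - exp (-A n) ≠ 0 := by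
      linarith [exp_lt_one_iff.2 (neg_neg_of_pos hn)]
    rw [mul_assoc, ← one_sub_exp_neg_mul_sum_Icc_exp _ _ hle]
    field_simp

theorem filter_range_succ_le_sub_eq_Icc_ceil (n : ℕ) (x y : ℝ) :
    (range (n + 1)).filter (fun i : ℕ => y ≤ (i : ℝ) - x) = Icc ⌈x + y⌉₊ n := by
  ext i
  simp only [mem_filter, mem_range, mem_Icc, Nat.lt_succ_iff, Nat.ceil_le, le_sub_iff_add_le',
    and_comm]

theorem tendsto_log_natCast_atTop : Tendsto (fun n : ℕ => log n) atTop atTop :=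
  tendsto_log_atTop.comp tendsto_natCast_atTop_atTop

section

variable {b : ℕ → ℝ}

theorem eventually_pos_of_tendsto_mul_log_div
    (hb : Tendsto (fun n : ℕ => b n * log n / n) atTop (𝓝 1)) :
    ∀ᶠ n in atTop, 0 < b n := by
  filter_upwards [hb.eventually_const_lt one_pos,
    tendsto_log_natCast_atTop.eventually_gt_atTop 0, eventually_gt_atTop 0] with n hratio hlog hn
  exact (mul_pos_iff_of_pos_right hlog).1
    ((div_pos_iff_of_pos_right (Nat.cast_pos.2 hn)).1 hratio)

theorem tendsto_div_natCast_of_tendsto_mul_log_div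
    (hb : Tendsto (fun n : ℕ => b n * log n / n) atTop (𝓝 1)) :
    Tendsto (fun n : ℕ => b n / n) atTop (𝓝 0) := by
  simpa using (hb.mul tendsto_log_natCast_atTop.inv_tendsto_atTop).congr' <| by
    filter_upwards [tendsto_log_natCast_atTop.eventually_gt_atTop 0] with n hlog
    simp only [Pi.inv_apply]
    field_simp

theorem tendsto_log_sq_div_mul_sum_exp {lam c : ℝ} (h : ℝ) (hlam : 0 < lam) (hc : 0 < c)
    (hb : Tendsto (fun n : ℕ => b n * log n / n) atTop (𝓝 1)) :
    Tendsto (fun n : ℕ => log n ^ 2 / n *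
        ∑ i ∈ (range (n + 1)).filter (fun i : ℕ => h * b n / log n ≤ (i : ℝ) - c * b n),
          exp (-(lam / c) * (log n ^ 2 / n) * ((i : ℝ) - c * b n)))
      atTop (𝓝 (c / lam * exp (-lam * h / c))) := by
  set A : ℕ → ℝ := fun n => lam / c * (log n ^ 2 / n) with hA_def
  set T : ℕ → ℝ := fun n => b n * (c + h / log n) with hT_def
  have hlog := tendsto_log_natCast_atTop
  have hcorr : Tendsto (fun n : ℕ => c + h / log n) atTop (𝓝 c) := by
    simpa [div_eq_mul_inv] using (hlog.inv_tendsto_atTop.const_mul h).const_add c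
  have hA : Tendsto A atTop (𝓝[>] 0) := by
    refine tendsto_nhdsWithin_iff.2 ⟨?_, ?_⟩
    · simpa using ((tendsto_pow_log_div_mul_add_atTop 1 0 2 one_ne_zero).comp
        tendsto_natCast_atTop_atTop).const_mul (lam / c)
    · filter_upwards [hlog.eventually_gt_atTop 0, eventually_gt_atTop 0] with n hlogn hn
      have : (0 : ℝ) < n := Nat.cast_pos.2 hn
      exact Set.mem_Ioi.2 (by positivity)
  have hT : ∀ᶠ n in atTop, 0 ≤ T n := by
    filter_upwards [eventually_pos_of_tendsto_mul_log_div hb, hcorr.eventually_const_lt hc]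
      with n hbn hcn
    exact mul_nonneg hbn.le hcn.le
  have htail : Tendsto (fun n => A n * (n - T n)) atTop atTop := by
    have hfrac : Tendsto (fun n : ℕ => 1 - b n / n * (c + h / log n)) atTop (𝓝 1) := by
      simpa using ((tendsto_div_natCast_of_tendsto_mul_log_div hb).mul hcorr).const_sub 1
    refine (((tendsto_pow_atTop two_ne_zero).comp hlog).const_mul_atTop (div_pos hlam hc)
      |>.atTop_mul_pos one_pos hfrac).congr' ?_
    filter_upwards [eventually_gt_atTop 0] with n hn
    have : (n : ℝ) ≠ 0 := Nat.cast_ne_zero.2 hn.ne'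
    simp only [hA_def, hT_def, Function.comp_apply]
    field_simp
  have hd : Tendsto (fun n => A n * (T n - c * b n)) atTop (𝓝 (lam * h / c)) := by
    simpa using (hb.const_mul (lam * h / c)).congr' <| by
      filter_upwards [hlog.eventually_gt_atTop 0] with n hlogn
      simp only [hA_def, hT_def]
      field_simp
      ring
  have hlim := (tendsto_mul_sum_Icc_ceil_exp hA hT htail hd).const_mul (c / lam)
  rw [show -(lam * h / c) = -lam * h / c by ring] at hlim
  refine hlim.congr fun n => ?_
  rw [filter_range_succ_le_sub_eq_Icc_ceil, show c * b n + h * b n / log n = T n by ring,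
    ← mul_assoc]
  congr 1
  · simp only [hA_def]; field_simp
  · simp only [hA_def, neg_mul, mul_assoc]

end

theorem stmt_4_general (lam c h : ℝ) (hlam : 0 < lam) (hc : 0 < c)
    (bsq : ℕ → ℝ)
    (hdef : ∀ n : ℕ, 2 ≤ n →
      bsq n = (n : ℝ) / Real.log n + (n : ℝ) * Real.log (Real.log n) / (Real.log n) ^ 2) :
    Tendsto (fun n : ℕ =>
        (Real.log n) ^ 2 / n *
          ∑ i ∈ (Finset.range (n + 1)).filter
              (fun i : ℕ => h * bsq n / Real.log n ≤ (i : ℝ) - c * bsq n),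
            Real.exp (-(lam / c) * ((Real.log n) ^ 2 / n) * ((i : ℝ) - c * bsq n)))
      atTop (nhds (c / lam * Real.exp (-lam * h / c))) := by
  have hloglog : Tendsto (fun n : ℕ => log (log n) / log n) atTop (𝓝 0) := by
    simpa [Function.comp_def] using (tendsto_pow_log_div_mul_add_atTop 1 0 1 one_ne_zero).comp
      tendsto_log_natCast_atTop
  refine tendsto_log_sq_div_mul_sum_exp h hlam hc ?_
  simpa using (hloglog.const_add 1).congr' <| by
    filter_upwards [eventually_ge_atTop 2] with n hn
    have hlog : 0 < log n := log_pos (by exact_mod_cast hn)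
    have : (0 : ℝ) < n := by positivity
    rw [hdef n hn]
    field_simp

/-- With `b_n² = n/log n + n log log n/(log n)²`, for fixed `λ, c > 0` and `h ≥ 0`,
`(log n)²/n · ∑_{i ≤ n, i − c b_n² ≥ h b_n²/log n} exp(−(λ/c)((log n)²/n)(i − c b_n²))`
converges to `(c/λ) e^{−λh/c}`. -/
theorem stmt_4 (lam c h : ℝ) (hlam : 0 < lam) (hc : 0 < c) (hh : 0 ≤ h)
    (bsq : ℕ → ℝ)
    (hdef : ∀ n : ℕ, 2 ≤ n →
      bsq n = (n : ℝ) / Real.log n + (n : ℝ) * Real.log (Real.log n) / (Real.log n) ^ 2) :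
    Tendsto (fun n : ℕ =>
        (Real.log n) ^ 2 / n *
          ∑ i ∈ (Finset.range (n + 1)).filter
              (fun i : ℕ => h * bsq n / Real.log n ≤ (i : ℝ) - c * bsq n),
            Real.exp (-(lam / c) * ((Real.log n) ^ 2 / n) * ((i : ℝ) - c * bsq n)))
      atTop (nhds (c / lam * Real.exp (-lam * h / c))) :=
  stmt_4_general lam c h hlam hc bsq hdef
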